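/- Let F be a field, N ≥ 1, and let k, n be natural numbers with 1 ≤ k < n. Then dim_F S^n − dim_F (S^n ∩ 𝔪^{k+1}) = C(k + N, N), where 𝔪 = (X_1, …, X_N) ⊆ F[X_0, …, X_N] and C denotes the binomial coefficient. Equivalently, the quotient vector space S^n / (S^n ∩ 𝔪^{k+1}) has F-dimension C(k + N, N). -/

import Mathlib

/-!
A polynomial lies in `𝔪 ^ m` exactly when each of its monomials has degree at least `m` in
`X 1, …, X N`. Hence `S^n` and `S^n ∩ 𝔪^(k+1)` are both spanned by monomials, and the difference
of their dimensions counts the monomials of degree `n` whose degree in `X 1, …, X N` is at most `k`.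
Changing the exponent of `X 0` so that the total degree becomes `k` maps these bijectively onto
the monomials of degree `k` in `N + 1` variables, of which there are `C(k + N, N)`.
-/

open MvPolynomial

/-- The ideal `𝔪 = (X 1, …, X N)` generated by the variables `X i` with `i ≠ 0`. -/
noncomputable def mIdeal (F : Type*) [CommSemiring F] (N : ℕ) :
    Ideal (MvPolynomial (Fin (N + 1)) F) :=
  Ideal.span {p | ∃ i : Fin (N + 1), i ≠ 0 ∧ p = X i}

open Finsupp

namespace MvPolynomial

section SpanXImage

variable {σ R : Type*} [CommSemiring R] {s : Set σ}

theorem le_weight_of_mem_span_X_image_pow {m : ℕ} {p : MvPolynomial σ R}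
    (hp : p ∈ Ideal.span (X '' s) ^ m) {d : σ →₀ ℕ} (hd : d ∈ p.support) :
    m ≤ weight (s.indicator (1 : σ → ℕ)) d := by
  classical
  induction m generalizing p d with
  | zero => exact Nat.zero_le _
  | succ m ih =>
    rw [pow_succ] at hp
    refine Submodule.mul_induction_on
      (C := fun q => ∀ e ∈ q.support, m + 1 ≤ weight (s.indicator (1 : σ → ℕ)) e) hp
      (fun q hq r hr e he => ?_) (fun q r hq hr e he => ?_) d hd
    · obtain ⟨a, ha, b, hb, rfl⟩ := Finset.mem_add.mp (support_mul q r he)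
      obtain ⟨i, hi, hbi⟩ := mem_ideal_span_X_image.mp hr b hb
      have hb := le_weight_of_ne_zero' (s.indicator (1 : σ → ℕ)) hbi
      rw [Set.indicator_of_mem hi, Pi.one_apply] at hb
      have ha := ih hq ha
      rw [map_add]
      omega
    · rcases Finset.mem_union.mp (support_add he) with h | h
      exacts [hq e h, hr e h]

theorem monomial_mem_span_X_image_pow {m : ℕ} {d : σ →₀ ℕ}
    (h : m ≤ weight (s.indicator (1 : σ → ℕ)) d) (r : R) :
    monomial d r ∈ Ideal.span (X '' s) ^ m := by
  induction m generalizing d with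
  | zero => simp
  | succ m ih =>
    obtain ⟨i, hi, hdi⟩ : ∃ i ∈ s, d i ≠ 0 := by
      by_contra! h0
      have : weight (s.indicator (1 : σ → ℕ)) d = 0 := by
        rw [weight_apply, Finsupp.sum]
        refine Finset.sum_eq_zero fun j hj => ?_
        by_cases hjs : j ∈ s
        · simp [h0 j hjs] at hj
        · simp [hjs]
      omega
    have hw := weight_sub_single_add (w := s.indicator (1 : σ → ℕ)) hdi
    rw [Set.indicator_of_mem hi, Pi.one_apply] at hw
    rw [← sub_add_single_one_cancel hdi, monomial_add_single, pow_one, pow_succ]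
    exact Ideal.mul_mem_mul (ih (by omega)) (Ideal.subset_span ⟨i, hi, rfl⟩)

theorem mem_span_X_image_pow_iff {m : ℕ} {p : MvPolynomial σ R} :
    p ∈ Ideal.span (X '' s) ^ m ↔ ∀ d ∈ p.support, m ≤ weight (s.indicator (1 : σ → ℕ)) d := by
  refine ⟨fun hp _ => le_weight_of_mem_span_X_image_pow hp, fun h => ?_⟩
  rw [p.as_sum]
  exact Ideal.sum_mem _ fun d hd => monomial_mem_span_X_image_pow (h d hd) _

theorem restrictScalars_span_X_image_pow (m : ℕ) :
    (Ideal.span (X '' s) ^ m : Ideal (MvPolynomial σ R)).restrictScalars R =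
      restrictSupport R {d | m ≤ weight (s.indicator (1 : σ → ℕ)) d} := by
  ext p
  rw [Submodule.restrictScalars_mem, mem_span_X_image_pow_iff, mem_restrictSupport_iff]
  rfl

end SpanXImage

theorem restrictSupport_inf {σ R : Type*} [CommSemiring R] (A B : Set (σ →₀ ℕ)) :
    restrictSupport R A ⊓ restrictSupport R B = restrictSupport R (A ∩ B) := by
  ext p
  simp only [Submodule.mem_inf, mem_restrictSupport_iff, Set.subset_inter_iff]

theorem finrank_restrictSupport {σ R : Type*} [CommRing R] [StrongRankCondition R]
    {A : Set (σ →₀ ℕ)} (hA : A.Finite) :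
    Module.finrank R (restrictSupport R A) = A.ncard := by
  have := hA.to_subtype
  rw [Module.finrank_eq_nat_card_basis (basisRestrictSupport R A), Nat.card_coe_set_eq]

end MvPolynomial

namespace Finsupp

variable {σ : Type*} (i : σ)

theorem degree_eq_apply_add_weight_indicator_compl (d : σ →₀ ℕ) :
    degree d = d i + weight (({i}ᶜ : Set σ).indicator (1 : σ → ℕ)) d := by
  classical
  induction d using Finsupp.induction_linear with
  | zero => simp
  | add f g hf hg => rw [map_add, map_add, hf, hg, add_apply]; ring
  | single j m => by_cases h : j = i <;> simp [weight_single, h, Ne.symm]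

theorem weight_update_of_eq_zero {R M : Type*} [Semiring R] [AddCommMonoid M] [Module R M]
    {w : σ → M} (hw : w i = 0) (d : σ →₀ R) (b : R) :
    weight w (d.update i b) = weight w d := by
  conv_rhs => rw [← single_add_erase i d]
  rw [update_eq_single_add_erase, map_add, map_add, weight_single, weight_single, hw,
    smul_zero, smul_zero]

theorem degree_update_eq_add_weight_indicator_compl (d : σ →₀ ℕ) (b : ℕ) :
    degree (d.update i b) = b + weight (({i}ᶜ : Set σ).indicator (1 : σ → ℕ)) d := by
  rw [degree_eq_apply_add_weight_indicator_compl i, weight_update_of_eq_zero i (by simp)]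
  classical
  rw [update_apply, if_pos rfl]

theorem weight_indicator_compl_update (d : σ →₀ ℕ) (b : ℕ) :
    weight (({i}ᶜ : Set σ).indicator (1 : σ → ℕ)) (d.update i b) =
      weight (({i}ᶜ : Set σ).indicator (1 : σ → ℕ)) d :=
  weight_update_of_eq_zero i (by simp) d b

/-- Resetting the `i`-th exponent turns degree `n` into degree `k` without changing the
degree in the other variables. -/
noncomputable def degreeEqWeightLeEquiv {k n : ℕ} (hkn : k ≤ n) :
    {d : σ →₀ ℕ // degree d = n ∧ weight (({i}ᶜ : Set σ).indicator (1 : σ → ℕ)) d ≤ k} ≃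
      {c : σ →₀ ℕ // degree c = k} where
  toFun d := ⟨d.1.update i (k - weight (({i}ᶜ : Set σ).indicator 1) d.1), by
    rw [degree_update_eq_add_weight_indicator_compl]
    have := d.2.2
    omega⟩
  invFun c := ⟨c.1.update i (n - weight (({i}ᶜ : Set σ).indicator 1) c.1), by
    have := degree_eq_apply_add_weight_indicator_compl i c.1
    rw [degree_update_eq_add_weight_indicator_compl, weight_indicator_compl_update]
    have := c.2
    omega⟩
  left_inv d := by
    obtain ⟨d, hdn, -⟩ := d
    have := degree_eq_apply_add_weight_indicator_compl i d
    ext1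
    simp only [update_idem, weight_indicator_compl_update]
    rw [show n - _ = d i by omega, update_self]
  right_inv c := by
    obtain ⟨c, hck⟩ := c
    have := degree_eq_apply_add_weight_indicator_compl i c
    ext1
    simp only [update_idem, weight_indicator_compl_update]
    rw [show k - _ = c i by omega, update_self]

theorem ncard_setOf_degree_eq_weight_le {k n : ℕ} (hkn : k ≤ n) :
    {d : σ →₀ ℕ | degree d = n ∧ weight (({i}ᶜ : Set σ).indicator (1 : σ → ℕ)) d ≤ k}.ncard =
      (Nat.card σ).multichoose k := by
  classical
  rw [← Nat.card_coe_set_eq, ← Sym.natCard_sym_eq_multichoose]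
  exact Nat.card_congr ((degreeEqWeightLeEquiv i hkn).trans
    ((Equiv.subtypeEquivRight fun c => Iff.rfl).trans (Sym.equivNatSum σ k).symm))

end Finsupp

theorem Submodule.finrank_quotient_comap_subtype {K V : Type*} [DivisionRing K] [AddCommGroup V]
    [Module K V] (S U : Submodule K V) [FiniteDimensional K S] :
    Module.finrank K (S ⧸ U.comap S.subtype) =
      Module.finrank K S - Module.finrank K ↥(S ⊓ U) := by
  have hcomap : U.comap S.subtype = (S ⊓ U).comap S.subtype := by
    rw [Submodule.comap_inf, Submodule.comap_subtype_self, top_inf_eq]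
  have hU : Module.finrank K (U.comap S.subtype) = Module.finrank K ↥(S ⊓ U) := by
    rw [hcomap]
    exact (Submodule.comapSubtypeEquivOfLe inf_le_left).finrank_eq
  have := (U.comap S.subtype).finrank_quotient_add_finrank
  omega

theorem mIdeal_eq_span_X_image (F : Type*) [CommSemiring F] (N : ℕ) :
    mIdeal F N = Ideal.span (X '' {0}ᶜ) := by
  rw [mIdeal]
  congr 1
  ext p
  simp [eq_comm]

theorem stmt_9_general {F : Type*} [Field F] {N : ℕ}
    (k n : ℕ) (hkn : k < n) :
    Module.finrank F ↥(homogeneousSubmodule (Fin (N + 1)) F n) -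
        Module.finrank F
          ↥(homogeneousSubmodule (Fin (N + 1)) F n ⊓
              Submodule.restrictScalars F ((mIdeal F N) ^ (k + 1))) =
      Nat.choose (k + N) N ∧
    Module.finrank F
        (↥(homogeneousSubmodule (Fin (N + 1)) F n) ⧸
          (Submodule.restrictScalars F ((mIdeal F N) ^ (k + 1))).comap
            (homogeneousSubmodule (Fin (N + 1)) F n).subtype) =
      Nat.choose (k + N) N := by
  have : FiniteDimensional F (homogeneousSubmodule (Fin (N + 1)) F n) :=
    Module.Finite.iff_fg.mpr (homogeneousSubmodule_fg _ _ n)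
  rw [Submodule.finrank_quotient_comap_subtype, and_self]
  set wt : (Fin (N + 1) →₀ ℕ) →+ ℕ :=
    weight (({0}ᶜ : Set (Fin (N + 1))).indicator (1 : Fin (N + 1) → ℕ))
  set A : Set (Fin (N + 1) →₀ ℕ) := {d | d.degree = n}
  have hA : A.Finite := (finite_of_degree_le n).subset fun d hd => hd.le
  have hS : homogeneousSubmodule (Fin (N + 1)) F n = restrictSupport F A :=
    homogeneousSubmodule_eq_finsupp_supported _ _ n
  have hAB : A \ (A ∩ {d | k + 1 ≤ wt d}) = {d | d.degree = n ∧ wt d ≤ k} := by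
    ext d
    simp only [A, Set.mem_sdiff, Set.mem_inter_iff, Set.mem_ofPred_eq]
    omega
  rw [hS, mIdeal_eq_span_X_image, restrictScalars_span_X_image_pow, restrictSupport_inf,
    finrank_restrictSupport hA, finrank_restrictSupport (hA.subset Set.inter_subset_left),
    ← Set.ncard_sdiff Set.inter_subset_left (hA.subset Set.inter_subset_left), hAB,
    ncard_setOf_degree_eq_weight_le 0 hkn.le, Nat.card_fin, Nat.multichoose_eq,
    Nat.add_right_comm, Nat.add_sub_cancel, add_comm N, Nat.choose_symm_add]

theorem stmt_9 {F : Type*} [Field F] {N : ℕ} (hN : 1 ≤ N)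
    (k n : ℕ) (hk : 1 ≤ k) (hkn : k < n) :
    Module.finrank F ↥(homogeneousSubmodule (Fin (N + 1)) F n) -
        Module.finrank F
          ↥(homogeneousSubmodule (Fin (N + 1)) F n ⊓
              Submodule.restrictScalars F ((mIdeal F N) ^ (k + 1))) =
      Nat.choose (k + N) N ∧
    Module.finrank F
        (↥(homogeneousSubmodule (Fin (N + 1)) F n) ⧸
          (Submodule.restrictScalars F ((mIdeal F N) ^ (k + 1))).comap
            (homogeneousSubmodule (Fin (N + 1)) F n).subtype) =
      Nat.choose (k + N) N :=
  stmt_9_general k n hkn
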